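/- arXiv:1311.5121 — 2 statements merged into one kernel-verified Lean document; each statement's English description precedes it below -/
import Mathlib

section
/- Let ρ be an elliptic N-function. Then there exists c ≥ 1, depending only on the characteristics of ρ, such that: (i) for all a, t ≥ 0, c⁻¹ (ρ*)_{ρ'(a)}(t) ≤ (ρ_a)*(t) ≤ c (ρ*)_{ρ'(a)}(t); and (ii) for all a ≥ 0 and all λ ∈ [0,1], c⁻¹ λ² ρ(a) ≤ ρ_a(λ a) ≤ c λ² ρ(a) and c⁻¹ λ² ρ(a) ≤ (ρ_a)*(λ ρ'(a)) ≤ c λ² ρ(a). -/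
open MeasureTheory Set Filter

noncomputable section

/-- An elliptic N-function `ρ` with (given) first and second derivatives `ρ'`, `ρ''` on
`[0,∞)` resp. `(0,∞)`, and characteristics `γ₁ ≤ γ₂`:  `ρ` is continuous, strictly
increasing and convex on `[0,∞)` with `ρ(0) = 0`, `ρ(t)/t → 0` as `t → 0⁺`,
`t/ρ(t) → 0` as `t → ∞`, `ρ` is `C¹` on `[0,∞)` and `C²` on `(0,∞)`, and
`γ₁ ρ'(t) ≤ t ρ''(t) ≤ γ₂ ρ'(t)` for all `t > 0`. -/
structure IsEllipticNFun (ρ ρ' ρ'' : ℝ → ℝ) (γ₁ γ₂ : ℝ) : Prop where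
  continuousOn : ContinuousOn ρ (Set.Ici 0)
  strictMonoOn : StrictMonoOn ρ (Set.Ici 0)
  convexOn : ConvexOn ℝ (Set.Ici 0) ρ
  map_zero : ρ 0 = 0
  tendsto_zero : Filter.Tendsto (fun t => ρ t / t) (nhdsWithin 0 (Set.Ioi 0)) (nhds 0)
  tendsto_atTop : Filter.Tendsto (fun t => t / ρ t) Filter.atTop (nhds 0)
  hasDerivAt : ∀ t ∈ Set.Ici (0:ℝ), HasDerivWithinAt ρ (ρ' t) (Set.Ici 0) t
  derivContinuousOn : ContinuousOn ρ' (Set.Ici 0)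
  hasDeriv2At : ∀ t ∈ Set.Ioi (0:ℝ), HasDerivAt ρ' (ρ'' t) t
  deriv2ContinuousOn : ContinuousOn ρ'' (Set.Ioi 0)
  gamma_pos : 0 < γ₁
  gamma_le : γ₁ ≤ γ₂
  elliptic : ∀ t ∈ Set.Ioi (0:ℝ), γ₁ * ρ' t ≤ t * ρ'' t ∧ t * ρ'' t ≤ γ₂ * ρ' t

/-- The shift of a function with derivative `g`: `shift g a t = ∫₀ᵗ (g(a+τ)/(a+τ)) τ dτ`.
For `g = ρ'` this is the shifted N-function `ρ_a`. -/
def shift (g : ℝ → ℝ) (a t : ℝ) : ℝ :=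
  ∫ τ in (0:ℝ)..t, (g (a + τ) / (a + τ)) * τ

/-- The derivative of the shifted function: `(ρ_a)'(t) = (ρ'(a+t)/(a+t)) t` for `g = ρ'`. -/
def shiftD (g : ℝ → ℝ) (a t : ℝ) : ℝ :=
  (g (a + t) / (a + t)) * t

/-- The conjugate (Legendre transform) `f*(t) = sup_{s ≥ 0} (s t - f(s))`. -/
def conj (f : ℝ → ℝ) (t : ℝ) : ℝ :=
  sSup ((fun s => s * t - f s) '' Set.Ici 0)

/-!
Write `b = ρ'(a)`, `φ = (ρ')⁻¹ = (ρ*)'`, `C = 2^{1/γ₁}` and `D = 2^{γ₂}`. Ellipticity gives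
`2 ρ'(x) ≤ ρ'(C x)` and `ρ'(2x) ≤ D ρ'(x)`, hence `φ(2y) ≤ C φ(y)`; for a monotone `g ≥ 0` with such a
doubling property, `ψ = shift g a` is comparable to its tangent bound `t ψ'(t)`.

The core estimate is `(ρ_a)*(t) ≈ t r` with `r = ((ρ*)_b)'(t) = t v / (b + t)`, `ρ'(v) = b + t`. It
follows from `(ρ_a)'(3C r) ≥ t`, which caps the supremum defining `(ρ_a)*(t)` at `3C r t`, and from
`(ρ_a)'(r / (4C²D)) ≤ t/2`, which makes `s = r / (4C²D)` a competitor with `s t - ρ_a(s) ≥ s t / 2`.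
Part (i) then follows from `(ρ*)_b(t) ≈ t r`, and part (ii) from `ρ(a) ≈ a b` and the pointwise
bounds `(ρ_a)'(λa) ≈ λ b`, `((ρ*)_b)'(λb) ≈ λ a`.
-/

open Real Topology

theorem hasDerivAt_of_forall_mul_sub_le {f g : ℝ → ℝ} {s : Set ℝ} {x : ℝ} (hs : s ∈ 𝓝 x)
    (hg : ContinuousAt g x) (h : ∀ y ∈ s, ∀ z ∈ s, g y * (z - y) ≤ f z - f y) :
    HasDerivAt f (g x) x := by
  rw [hasDerivAt_iff_isLittleO, Asymptotics.isLittleO_iff]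
  intro ε hε
  have hx := mem_of_mem_nhds hs
  filter_upwards [hs, hg (Metric.closedBall_mem_nhds (g x) hε)] with y hy hgy
  rw [mem_preimage, Metric.mem_closedBall, Real.dist_eq] at hgy
  have h₁ := h x hx y hy
  have h₂ := h y hy x hx
  have hdiff : |(g y - g x) * (y - x)| ≤ ε * |y - x| := by
    rw [abs_mul]
    exact mul_le_mul_of_nonneg_right hgy (abs_nonneg _)
  rw [Real.norm_eq_abs, Real.norm_eq_abs, smul_eq_mul, abs_le]
  constructor <;> nlinarith [le_abs_self ((g y - g x) * (y - x)), abs_nonneg (y - x)]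

section LogDerivative

variable {f f' : ℝ → ℝ} {γ : ℝ}

theorem hasDerivAt_log_sub_mul_log {x : ℝ} (hf : HasDerivAt f (f' x) x) (hfx : 0 < f x)
    (hx : 0 < x) :
    HasDerivAt (fun y => log (f y) - γ * log y) ((x * f' x - γ * f x) / (x * f x)) x := by
  refine ((hf.log hfx.ne').sub ((hasDerivAt_log hx.ne').const_mul γ)).congr_deriv ?_
  field_simp

theorem log_mul_rpow {c y : ℝ} (hc : 0 < c) (hy : 0 < y) :
    log (c ^ γ * y) = γ * log c + log y := by
  rw [log_mul (rpow_pos_of_pos hc γ).ne' hy.ne', log_rpow hc]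

variable (hf : ∀ x > 0, HasDerivAt f (f' x) x) (hpos : ∀ x > 0, 0 < f x)
include hf hpos

theorem rpow_mul_le_of_le_mul_deriv (h : ∀ x > 0, γ * f x ≤ x * f' x) {x c : ℝ} (hx : 0 < x)
    (hc : 1 ≤ c) : c ^ γ * f x ≤ f (c * x) := by
  have hcx : 0 < c * x := by positivity
  have hmono : MonotoneOn (fun y => log (f y) - γ * log y) (Ioi 0) := by
    refine monotoneOn_of_hasDerivWithinAt_nonneg (convex_Ioi 0)
      (f' := fun y => (y * f' y - γ * f y) / (y * f y))
      (fun y hy => (hasDerivAt_log_sub_mul_log (hf y hy) (hpos y hy) hy).continuousAt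
        |>.continuousWithinAt) (fun y hy => ?_) (fun y hy => ?_)
    · rw [interior_Ioi] at hy ⊢
      exact (hasDerivAt_log_sub_mul_log (hf y hy) (hpos y hy) hy).hasDerivWithinAt
    · rw [interior_Ioi] at hy
      exact div_nonneg (sub_nonneg.2 (h y hy)) (mul_pos hy (hpos y hy)).le
  have hlog := hmono hx hcx (le_mul_of_one_le_left hx.le hc)
  rw [← log_le_log_iff (mul_pos (by positivity) (hpos x hx)) (hpos _ hcx),
    log_mul_rpow (by positivity) (hpos x hx)]
  simp only [log_mul (by linarith : (0:ℝ) < c).ne' hx.ne'] at hlog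
  linarith

theorem le_rpow_mul_of_mul_deriv_le (h : ∀ x > 0, x * f' x ≤ γ * f x) {x c : ℝ} (hx : 0 < x)
    (hc : 1 ≤ c) : f (c * x) ≤ c ^ γ * f x := by
  have hcx : 0 < c * x := by positivity
  have hanti : AntitoneOn (fun y => log (f y) - γ * log y) (Ioi 0) := by
    refine antitoneOn_of_hasDerivWithinAt_nonpos (convex_Ioi 0)
      (f' := fun y => (y * f' y - γ * f y) / (y * f y))
      (fun y hy => (hasDerivAt_log_sub_mul_log (hf y hy) (hpos y hy) hy).continuousAt
        |>.continuousWithinAt) (fun y hy => ?_) (fun y hy => ?_)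
    · rw [interior_Ioi] at hy ⊢
      exact (hasDerivAt_log_sub_mul_log (hf y hy) (hpos y hy) hy).hasDerivWithinAt
    · rw [interior_Ioi] at hy
      exact div_nonpos_of_nonpos_of_nonneg (sub_nonpos.2 (h y hy)) (mul_pos hy (hpos y hy)).le
  have hlog := hanti hx hcx (le_mul_of_one_le_left hx.le hc)
  rw [← log_le_log_iff (hpos _ hcx) (mul_pos (by positivity) (hpos x hx)),
    log_mul_rpow (by positivity) (hpos x hx)]
  simp only [log_mul (by linarith : (0:ℝ) < c).ne' hx.ne'] at hlog
  linarith

end LogDerivative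

section Shift

variable {g : ℝ → ℝ} {a : ℝ}

theorem shiftD_eq (s : ℝ) : shiftD g a s = g (a + s) * (s / (a + s)) := by
  rw [shiftD, div_mul_eq_mul_div, mul_div_assoc]

variable (hg₀ : 0 ≤ g 0) (hg : MonotoneOn g (Ici 0))
include hg₀ hg

theorem nonneg_of_monotoneOn {x : ℝ} (hx : 0 ≤ x) : 0 ≤ g x :=
  hg₀.trans (hg (mem_Ici.2 le_rfl) hx hx)

theorem shiftD_nonneg (ha : 0 ≤ a) {s : ℝ} (hs : 0 ≤ s) : 0 ≤ shiftD g a s :=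
  mul_nonneg (div_nonneg (nonneg_of_monotoneOn hg₀ hg (by linarith)) (by linarith)) hs

theorem shiftD_le (ha : 0 ≤ a) {s : ℝ} (hs : 0 ≤ s) : shiftD g a s ≤ g (a + s) := by
  rw [shiftD_eq]
  exact mul_le_of_le_one_right (nonneg_of_monotoneOn hg₀ hg (by linarith))
    (div_le_one_of_le₀ (by linarith) (by linarith))

theorem shiftD_le_mul_div (ha : 0 < a) {s : ℝ} (hs : 0 ≤ s) :
    shiftD g a s ≤ g (a + s) * (s / a) := by
  rw [shiftD_eq]
  exact mul_le_mul_of_nonneg_left (div_le_div_of_nonneg_left hs ha (by linarith))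
    (nonneg_of_monotoneOn hg₀ hg (by linarith))

omit hg₀ in
theorem mul_div_le_shiftD (ha : 0 ≤ a) {s : ℝ} (hs : 0 ≤ s) :
    g a * (s / (a + s)) ≤ shiftD g a s := by
  rw [shiftD_eq]
  exact mul_le_mul_of_nonneg_right (hg ha (by simp; linarith) (by linarith))
    (div_nonneg hs (by linarith))

theorem shiftD_monotoneOn (ha : 0 ≤ a) : MonotoneOn (shiftD g a) (Ici 0) := by
  intro s hs s' hs' hss'
  rw [mem_Ici] at hs hs'
  rw [shiftD_eq, shiftD_eq]
  have hratio : s / (a + s) ≤ s' / (a + s') := by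
    rcases (add_nonneg ha hs).eq_or_lt with h | h
    · rw [← h, div_zero]
      exact div_nonneg hs' (by linarith)
    · rw [div_le_div_iff₀ h (by linarith)]
      nlinarith
  exact mul_le_mul (hg (by simp; linarith) (by simp; linarith) (by linarith)) hratio
    (div_nonneg hs (by linarith)) (nonneg_of_monotoneOn hg₀ hg (by linarith))

theorem intervalIntegrable_shiftD (ha : 0 ≤ a) {u v : ℝ} (hu : 0 ≤ u) (hv : 0 ≤ v) :
    IntervalIntegrable (shiftD g a) volume u v :=
  ((shiftD_monotoneOn hg₀ hg ha).mono
    fun _ hx => le_trans (le_min hu hv) hx.1).intervalIntegrable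

theorem shift_nonneg (ha : 0 ≤ a) {t : ℝ} (ht : 0 ≤ t) : 0 ≤ shift g a t :=
  intervalIntegral.integral_nonneg ht fun _ hτ => shiftD_nonneg hg₀ hg ha hτ.1

theorem shift_le_mul_shiftD (ha : 0 ≤ a) {t : ℝ} (ht : 0 ≤ t) :
    shift g a t ≤ t * shiftD g a t := by
  calc shift g a t ≤ ∫ _ in (0:ℝ)..t, shiftD g a t :=
        intervalIntegral.integral_mono_on ht (intervalIntegrable_shiftD hg₀ hg ha le_rfl ht)
          intervalIntegrable_const fun _ hτ => shiftD_monotoneOn hg₀ hg ha hτ.1 ht hτ.2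
    _ = t * shiftD g a t := by simp

theorem shiftD_mul_sub_le_shift_sub (ha : 0 ≤ a) {s₀ s : ℝ} (hs₀ : 0 ≤ s₀) (h : s₀ ≤ s) :
    shiftD g a s₀ * (s - s₀) ≤ shift g a s - shift g a s₀ := by
  have hs : 0 ≤ s := hs₀.trans h
  rw [show shift g a s - shift g a s₀ = ∫ τ in s₀..s, shiftD g a τ from
    intervalIntegral.integral_interval_sub_left (intervalIntegrable_shiftD hg₀ hg ha le_rfl hs)
      (intervalIntegrable_shiftD hg₀ hg ha le_rfl hs₀)]
  calc shiftD g a s₀ * (s - s₀) = ∫ _ in s₀..s, shiftD g a s₀ := by simp [mul_comm]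
    _ ≤ ∫ τ in s₀..s, shiftD g a τ :=
        intervalIntegral.integral_mono_on h intervalIntegrable_const
          (intervalIntegrable_shiftD hg₀ hg ha hs₀ hs)
          fun _ hτ => shiftD_monotoneOn hg₀ hg ha hs₀ (hs₀.trans hτ.1) hτ.1

theorem half_mul_shiftD_half_le_shift (ha : 0 ≤ a) {t : ℝ} (ht : 0 ≤ t) :
    t / 2 * shiftD g a (t / 2) ≤ shift g a t := by
  have h := shiftD_mul_sub_le_shift_sub hg₀ hg ha (s₀ := t / 2) (s := t) (by positivity)
    (by linarith)
  have h₀ := shift_nonneg hg₀ hg ha (t := t / 2) (by positivity)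
  linarith

theorem mul_shiftD_le_shift {D : ℝ} (hD : 0 ≤ D) (hgD : ∀ x, 0 ≤ x → g (2 * x) ≤ D * g x)
    (ha : 0 ≤ a) {t : ℝ} (ht : 0 ≤ t) : t * shiftD g a t ≤ 4 * D * shift g a t := by
  rcases ht.eq_or_lt with rfl | ht
  · simp [shiftD, shift]
  have hat : 0 < a + t / 2 := by linarith
  have hDg : 0 ≤ D * g (a + t / 2) :=
    (nonneg_of_monotoneOn hg₀ hg (by linarith)).trans (hgD _ hat.le)
  have hdouble : g (a + t) ≤ D * g (a + t / 2) :=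
    (hg (by simp; linarith) (by simp; linarith) (by linarith)).trans (hgD _ hat.le)
  have hratio : t / (a + t) ≤ 2 * (t / 2 / (a + t / 2)) := by
    rw [mul_div_assoc', div_le_div_iff₀ (by linarith) hat]
    nlinarith
  have hhalf : shiftD g a t ≤ 2 * D * shiftD g a (t / 2) := by
    rw [shiftD_eq, shiftD_eq]
    calc g (a + t) * (t / (a + t)) ≤ D * g (a + t / 2) * (2 * (t / 2 / (a + t / 2))) :=
          mul_le_mul hdouble hratio (by positivity) hDg
      _ = 2 * D * (g (a + t / 2) * (t / 2 / (a + t / 2))) := by ring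
  calc t * shiftD g a t ≤ t * (2 * D * shiftD g a (t / 2)) :=
        mul_le_mul_of_nonneg_left hhalf ht.le
    _ = 4 * D * (t / 2 * shiftD g a (t / 2)) := by ring
    _ ≤ 4 * D * shift g a t :=
        mul_le_mul_of_nonneg_left (half_mul_shiftD_half_le_shift hg₀ hg ha ht.le) (by positivity)

theorem shiftD_mul_self_le {D : ℝ} (hgD : ∀ x, 0 ≤ x → g (2 * x) ≤ D * g x) (ha : 0 ≤ a)
    {lam : ℝ} (hlam : lam ∈ Icc (0:ℝ) 1) : shiftD g a (lam * a) ≤ D * g a * lam := by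
  obtain ⟨hl₀, hl₁⟩ := hlam
  have hratio : lam * a / (a + lam * a) ≤ lam := by
    rcases ha.eq_or_lt with rfl | ha
    · simpa using hl₀
    rw [div_le_iff₀ (by positivity)]
    nlinarith [mul_nonneg hl₀ hl₀]
  have hga : g (a + lam * a) ≤ D * g a :=
    (hg (by simp; positivity) (by simp; linarith) (by nlinarith)).trans (hgD a ha)
  rw [shiftD_eq]
  exact mul_le_mul hga hratio (by positivity)
    ((nonneg_of_monotoneOn hg₀ hg (by positivity)).trans hga)

omit hg₀ in
theorem le_shiftD_mul_self (hg₀ : g 0 = 0) (ha : 0 ≤ a) {lam : ℝ} (hlam : lam ∈ Icc (0:ℝ) 1) :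
    g a * lam / 2 ≤ shiftD g a (lam * a) := by
  obtain ⟨hl₀, hl₁⟩ := hlam
  rcases ha.eq_or_lt with rfl | ha
  · simp [hg₀, shiftD]
  calc g a * lam / 2 ≤ g a * (lam * a / (a + lam * a)) := by
        rw [mul_div_assoc]
        refine mul_le_mul_of_nonneg_left ?_ (nonneg_of_monotoneOn hg₀.ge hg ha.le)
        rw [div_le_div_iff₀ two_pos (by positivity)]
        nlinarith [mul_nonneg hl₀ ha.le]
    _ ≤ shiftD g a (lam * a) := mul_div_le_shiftD hg ha.le (by positivity)

theorem mul_sub_shift_le_of_le_shiftD (ha : 0 ≤ a) {t s₀ : ℝ} (ht : 0 ≤ t) (hs₀ : 0 ≤ s₀)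
    (hd : t ≤ shiftD g a s₀) {s : ℝ} (hs : 0 ≤ s) : s * t - shift g a s ≤ s₀ * t := by
  rcases le_total s s₀ with h | h
  · nlinarith [shift_nonneg hg₀ hg ha hs]
  · nlinarith [shiftD_mul_sub_le_shift_sub hg₀ hg ha hs₀ h, shift_nonneg hg₀ hg ha hs₀,
      mul_le_mul_of_nonneg_right hd (sub_nonneg.2 h)]

theorem conj_shift_le_of_le_shiftD (ha : 0 ≤ a) {t s₀ : ℝ} (ht : 0 ≤ t) (hs₀ : 0 ≤ s₀)
    (hd : t ≤ shiftD g a s₀) : conj (shift g a) t ≤ s₀ * t :=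
  csSup_le ⟨_, mem_image_of_mem _ (mem_Ici.2 le_rfl)⟩ <| forall_mem_image.2 fun _ hs =>
    mul_sub_shift_le_of_le_shiftD hg₀ hg ha ht hs₀ hd hs

theorem mul_sub_shift_le_conj_shift (ha : 0 ≤ a) {t s₀ : ℝ} (ht : 0 ≤ t) (hs₀ : 0 ≤ s₀)
    (hd : t ≤ shiftD g a s₀) {s : ℝ} (hs : 0 ≤ s) : s * t - shift g a s ≤ conj (shift g a) t :=
  le_csSup ⟨s₀ * t, forall_mem_image.2 fun _ hs =>
    mul_sub_shift_le_of_le_shiftD hg₀ hg ha ht hs₀ hd hs⟩ (mem_image_of_mem _ hs)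

end Shift

def derivInv (ρ' : ℝ → ℝ) : ℝ → ℝ := Function.invFunOn ρ' (Ici 0)

namespace IsEllipticNFun

variable {ρ ρ' ρ'' : ℝ → ℝ} {γ₁ γ₂ : ℝ} (H : IsEllipticNFun ρ ρ' ρ'' γ₁ γ₂)
include H

theorem pos {t : ℝ} (ht : 0 < t) : 0 < ρ t := by
  simpa [H.map_zero] using H.strictMonoOn (mem_Ici.2 le_rfl) (mem_Ici.2 ht.le) ht

theorem nonneg {t : ℝ} (ht : 0 ≤ t) : 0 ≤ ρ t := by
  rcases ht.eq_or_lt with rfl | ht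
  · exact H.map_zero.ge
  · exact (H.pos ht).le

theorem hasDerivAt_of_pos {t : ℝ} (ht : 0 < t) : HasDerivAt ρ (ρ' t) t :=
  (H.hasDerivAt t ht.le).hasDerivAt (Ici_mem_nhds ht)

theorem deriv_mul_sub_le {x y : ℝ} (hx : 0 ≤ x) (hy : 0 ≤ y) : ρ' x * (y - x) ≤ ρ y - ρ x := by
  rcases lt_trichotomy x y with hxy | rfl | hxy
  · have := H.convexOn.le_slope_of_hasDerivWithinAt hx hy hxy (H.hasDerivAt x hx)
    rwa [slope_def_field, le_div_iff₀ (sub_pos.2 hxy)] at this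
  · simp
  · have := H.convexOn.slope_le_of_hasDerivWithinAt hy hx hxy (H.hasDerivAt x hx)
    rw [slope_def_field, div_le_iff₀ (sub_pos.2 hxy)] at this
    linarith

theorem deriv_monotoneOn : MonotoneOn ρ' (Ici 0) := by
  intro x hx y hy hxy
  rcases hxy.eq_or_lt with rfl | hxy
  · exact le_rfl
  exact (H.convexOn.le_slope_of_hasDerivWithinAt hx hy hxy (H.hasDerivAt x hx)).trans
    (H.convexOn.slope_le_of_hasDerivWithinAt hx hy hxy (H.hasDerivAt y hy))

theorem deriv_zero : ρ' 0 = 0 := by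
  have hslope := hasDerivWithinAt_iff_tendsto_slope.1 (H.hasDerivAt 0 (mem_Ici.2 le_rfl))
  rw [show Ici (0:ℝ) \ {0} = Ioi 0 by ext; simp [lt_iff_le_and_ne, eq_comm]] at hslope
  refine tendsto_nhds_unique hslope (H.tendsto_zero.congr' ?_)
  filter_upwards [self_mem_nhdsWithin] with x hx
  simp [slope_def_field, H.map_zero]

theorem deriv_nonneg {t : ℝ} (ht : 0 ≤ t) : 0 ≤ ρ' t :=
  H.deriv_zero.ge.trans (H.deriv_monotoneOn (mem_Ici.2 le_rfl) ht ht)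

theorem le_mul_deriv {t : ℝ} (ht : 0 ≤ t) : ρ t ≤ t * ρ' t := by
  have := H.deriv_mul_sub_le ht le_rfl
  rw [H.map_zero] at this
  linarith

theorem mul_deriv_le {t : ℝ} (ht : 0 ≤ t) : t * ρ' t ≤ (1 + γ₂) * ρ t := by
  have hmono : MonotoneOn (fun x => (1 + γ₂) * ρ x - x * ρ' x) (Ici 0) := by
    refine monotoneOn_of_hasDerivWithinAt_nonneg (convex_Ici 0)
      (f' := fun x => γ₂ * ρ' x - x * ρ'' x)
      ((H.continuousOn.const_smul (1 + γ₂)).sub (continuousOn_id.mul H.derivContinuousOn))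
      (fun x hx => ?_) (fun x hx => ?_)
    · rw [interior_Ici] at hx ⊢
      refine ((((H.hasDerivAt_of_pos hx).const_mul (1 + γ₂)).sub
        ((hasDerivAt_id x).mul (H.hasDeriv2At x hx))).congr_deriv ?_).hasDerivWithinAt
      simp only [id]
      ring
    · rw [interior_Ici] at hx
      linarith [(H.elliptic x hx).2]
  have := hmono (mem_Ici.2 le_rfl) ht ht
  simp only [H.map_zero, mul_zero, zero_mul, sub_zero] at this
  linarith

theorem deriv_pos {t : ℝ} (ht : 0 < t) : 0 < ρ' t :=
  pos_of_mul_pos_right ((H.pos ht).trans_le (H.le_mul_deriv ht.le)) ht.le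

theorem deriv_strictMonoOn : StrictMonoOn ρ' (Ici 0) := by
  refine strictMonoOn_of_hasDerivWithinAt_pos (convex_Ici 0) H.derivContinuousOn
    (f' := ρ'') (fun x hx => ?_) (fun x hx => ?_)
  · rw [interior_Ici] at hx ⊢
    exact (H.hasDeriv2At x hx).hasDerivWithinAt
  · rw [interior_Ici] at hx
    have := (H.elliptic x hx).1
    exact pos_of_mul_pos_right ((mul_pos H.gamma_pos (H.deriv_pos hx)).trans_le this) hx.le

theorem two_mul_deriv_le {x : ℝ} (hx : 0 ≤ x) :
    2 * ρ' x ≤ ρ' ((2:ℝ) ^ γ₁⁻¹ * x) := by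
  rcases hx.eq_or_lt with rfl | hx
  · simp [H.deriv_zero]
  have h := rpow_mul_le_of_le_mul_deriv H.hasDeriv2At (fun _ hy => H.deriv_pos hy)
    (fun y hy => (H.elliptic y hy).1) hx (one_le_rpow one_le_two (inv_nonneg.2 H.gamma_pos.le))
  rwa [← rpow_mul zero_le_two, inv_mul_cancel₀ H.gamma_pos.ne', rpow_one] at h

theorem four_mul_deriv_le {x : ℝ} (hx : 0 ≤ x) : 4 * ρ' x ≤ ρ' ((2 ^ γ₁⁻¹) ^ 2 * x) := by
  have h₁ := H.two_mul_deriv_le hx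
  have h₂ := H.two_mul_deriv_le (x := 2 ^ γ₁⁻¹ * x) (by positivity)
  rw [sq, mul_assoc]
  linarith

theorem deriv_two_mul_le {x : ℝ} (hx : 0 ≤ x) : ρ' (2 * x) ≤ 2 ^ γ₂ * ρ' x := by
  rcases hx.eq_or_lt with rfl | hx
  · simp [H.deriv_zero]
  exact le_rpow_mul_of_mul_deriv_le H.hasDeriv2At (fun _ hy => H.deriv_pos hy)
    (fun y hy => (H.elliptic y hy).2) hx one_le_two

theorem tendsto_deriv_atTop : Tendsto ρ' atTop atTop := by
  have hinv : Tendsto (fun t => t / ρ t) atTop (𝓝[>] 0) :=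
    tendsto_nhdsWithin_of_tendsto_nhds_of_eventually_within _ H.tendsto_atTop
      (by filter_upwards [eventually_gt_atTop 0] with t ht using div_pos ht (H.pos ht))
  refine tendsto_atTop_mono' _ ?_ (hinv.inv_tendsto_nhdsGT_zero.congr fun t => inv_div _ _)
  filter_upwards [eventually_gt_atTop 0] with t ht
  exact (div_le_iff₀ ht).2 (by linarith [H.le_mul_deriv ht.le])

theorem surjOn_deriv : SurjOn ρ' (Ici 0) (Ici 0) := by
  intro y hy
  obtain ⟨X, hyX, hX⟩ :=
    ((H.tendsto_deriv_atTop.eventually_ge_atTop y).and (eventually_ge_atTop 0)).exists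
  obtain ⟨x, hx, rfl⟩ := intermediate_value_Icc hX
    (H.derivContinuousOn.mono fun _ hx => hx.1) ⟨by rwa [H.deriv_zero], hyX⟩
  exact ⟨x, hx.1, rfl⟩

theorem derivInv_nonneg {y : ℝ} (hy : 0 ≤ y) : 0 ≤ derivInv ρ' y :=
  Function.invFunOn_mem (H.surjOn_deriv hy)

theorem deriv_derivInv {y : ℝ} (hy : 0 ≤ y) : ρ' (derivInv ρ' y) = y :=
  Function.invFunOn_eq (H.surjOn_deriv hy)

theorem derivInv_deriv {x : ℝ} (hx : 0 ≤ x) : derivInv ρ' (ρ' x) = x :=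
  H.deriv_strictMonoOn.injOn (H.derivInv_nonneg (H.deriv_nonneg hx)) hx
    (H.deriv_derivInv (H.deriv_nonneg hx))

theorem derivInv_zero : derivInv ρ' 0 = 0 := by
  simpa [H.deriv_zero] using H.derivInv_deriv le_rfl

theorem derivInv_le_iff {x y : ℝ} (hx : 0 ≤ x) (hy : 0 ≤ y) : derivInv ρ' y ≤ x ↔ y ≤ ρ' x := by
  rw [← H.deriv_strictMonoOn.le_iff_le (H.derivInv_nonneg hy) hx, H.deriv_derivInv hy]

theorem derivInv_monotoneOn : MonotoneOn (derivInv ρ') (Ici 0) := fun _ hy _ hz hyz =>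
  (H.derivInv_le_iff (H.derivInv_nonneg hz) hy).2 (by rwa [H.deriv_derivInv hz])

theorem derivInv_pos {y : ℝ} (hy : 0 < y) : 0 < derivInv ρ' y := by
  refine (H.derivInv_nonneg hy.le).lt_of_ne fun h => hy.ne ?_
  rw [← H.deriv_derivInv hy.le, ← h, H.deriv_zero]

theorem derivInv_two_mul_le {y : ℝ} (hy : 0 ≤ y) :
    derivInv ρ' (2 * y) ≤ 2 ^ γ₁⁻¹ * derivInv ρ' y := by
  have hφ := H.derivInv_nonneg hy
  rw [H.derivInv_le_iff (by positivity) (by positivity)]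
  simpa [H.deriv_derivInv hy] using H.two_mul_deriv_le hφ

theorem continuousAt_derivInv {y : ℝ} (hy : 0 < y) : ContinuousAt (derivInv ρ') y :=
  continuousAt_of_monotoneOn_of_image_mem_nhds (H.derivInv_monotoneOn.mono Ioi_subset_Ici_self)
    (Ioi_mem_nhds hy) <| mem_of_superset (Ioi_mem_nhds (H.derivInv_pos hy)) fun x hx =>
      ⟨ρ' x, H.deriv_pos hx, H.derivInv_deriv hx.le⟩

theorem isGreatest_conj {y : ℝ} (hy : 0 ≤ y) :
    IsGreatest ((fun s => s * y - ρ s) '' Ici 0) (derivInv ρ' y * y - ρ (derivInv ρ' y)) := by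
  refine ⟨mem_image_of_mem _ (H.derivInv_nonneg hy), forall_mem_image.2 fun s hs => ?_⟩
  have := H.deriv_mul_sub_le (H.derivInv_nonneg hy) hs
  rw [H.deriv_derivInv hy] at this
  linarith

theorem derivInv_mul_sub_le_conj_sub {y z : ℝ} (hy : 0 ≤ y) (hz : 0 ≤ z) :
    derivInv ρ' y * (z - y) ≤ conj ρ z - conj ρ y := by
  have := (H.isGreatest_conj hz).2 (mem_image_of_mem _ (H.derivInv_nonneg hy))
  rw [conj, conj, (H.isGreatest_conj hy).csSup_eq, (H.isGreatest_conj hz).csSup_eq]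
  linarith

theorem hasDerivAt_conj {y : ℝ} (hy : 0 < y) : HasDerivAt (conj ρ) (derivInv ρ' y) y :=
  hasDerivAt_of_forall_mul_sub_le (Ioi_mem_nhds hy) (H.continuousAt_derivInv hy)
    fun _ hu _ hw => H.derivInv_mul_sub_le_conj_sub (le_of_lt hu) (le_of_lt hw)

theorem shift_deriv_conj {b t : ℝ} (hb : 0 ≤ b) (ht : 0 ≤ t) :
    shift (deriv (conj ρ)) b t = shift (derivInv ρ') b t := by
  refine intervalIntegral.integral_congr fun τ hτ => ?_
  rw [uIcc_of_le ht] at hτ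
  rcases (add_nonneg hb hτ.1).eq_or_lt with h | h
  · simp [← h]
  · simp only [(H.hasDerivAt_conj h).deriv]

theorem exists_shiftD_derivInv_eq {a t : ℝ} (ha : 0 ≤ a) (ht : 0 < t) :
    ∃ v, 0 < v ∧ a ≤ v ∧ ρ' v = ρ' a + t ∧
      shiftD (derivInv ρ') (ρ' a) t * (ρ' a + t) = t * v := by
  have hbt : 0 < ρ' a + t := by linarith [H.deriv_nonneg ha]
  refine ⟨derivInv ρ' (ρ' a + t), H.derivInv_pos hbt, ?_, H.deriv_derivInv hbt.le, ?_⟩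
  · calc a = derivInv ρ' (ρ' a) := (H.derivInv_deriv ha).symm
      _ ≤ derivInv ρ' (ρ' a + t) :=
        H.derivInv_monotoneOn (H.deriv_nonneg ha) hbt.le (by linarith)
  · rw [shiftD]
    field_simp

theorem deriv_le_shiftD_of_mul_le {a s v : ℝ} (hv₀ : 0 < v) (ha : 0 ≤ a) (hav : a ≤ v)
    (hs : 2 ^ γ₁⁻¹ * v ≤ s) : ρ' v ≤ shiftD ρ' a s := by
  have hv := hv₀.le
  have hvs : v ≤ s := (le_mul_of_one_le_left hv
    (one_le_rpow one_le_two (inv_nonneg.2 H.gamma_pos.le))).trans hs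
  have hgrow : 2 * ρ' v ≤ ρ' (a + s) :=
    (H.two_mul_deriv_le hv).trans
      (H.deriv_monotoneOn (by simp; positivity) (by simp; linarith) (by linarith))
  have hratio : 1 / 2 ≤ s / (a + s) := by
    rw [le_div_iff₀ (by linarith)]
    linarith
  rw [shiftD_eq]
  nlinarith [H.deriv_nonneg hv]

/-- If `b = ρ'(a) ≤ 2t`, then `3C r ≥ C v` and `deriv_le_shiftD_of_mul_le` applies; otherwise the
crude bound `(ρ_a)'(s) ≥ b s / (a + s)` suffices. -/
theorem le_shiftD_mul_shiftD_derivInv {a t : ℝ} (ha : 0 ≤ a) (ht : 0 ≤ t) :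
    t ≤ shiftD ρ' a (3 * 2 ^ γ₁⁻¹ * shiftD (derivInv ρ') (ρ' a) t) := by
  rcases ht.eq_or_lt with rfl | ht
  · simp [shiftD]
  obtain ⟨v, hv₀, hav, hv, hr⟩ := H.exists_shiftD_derivInv_eq ha ht
  set C : ℝ := 2 ^ γ₁⁻¹
  have hC : 1 ≤ C := one_le_rpow one_le_two (inv_nonneg.2 H.gamma_pos.le)
  set b := ρ' a
  set r := shiftD (derivInv ρ') b t
  have hb : 0 ≤ b := H.deriv_nonneg ha
  have hr₀ : 0 < r := pos_of_mul_pos_left (hr ▸ mul_pos ht hv₀) (by positivity)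
  have hs₀ : 3 * C * r * (b + t) = 3 * t * (C * v) := by rw [mul_assoc, hr]; ring
  rcases le_total b (2 * t) with hbt | hbt
  · have hCv : C * v ≤ 3 * C * r :=
      le_of_mul_le_mul_right (by nlinarith [mul_nonneg (by positivity : 0 ≤ C * v) ht.le])
        (by positivity : 0 < b + t)
    exact (by linarith : t ≤ ρ' v).trans (H.deriv_le_shiftD_of_mul_le hv₀ ha hav hCv)
  · have h3ta : 3 * t * a ≤ 3 * C * r * (b + t) := by
      rw [hs₀]
      nlinarith [mul_le_mul_of_nonneg_left (hav.trans (le_mul_of_one_le_left hv₀.le hC)) ht.le]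
    have hkey : t * (a + 3 * C * r) * (b + t) ≤ b * (3 * C * r) * (b + t) := by
      nlinarith [mul_le_mul_of_nonneg_left h3ta (by linarith : 0 ≤ b - 2 * t),
        mul_nonneg (mul_nonneg ht.le ha) (by linarith : 0 ≤ b - 2 * t)]
    refine le_trans ?_ (mul_div_le_shiftD H.deriv_monotoneOn ha (by positivity))
    rw [← mul_div_assoc, le_div_iff₀ (by positivity)]
    exact le_of_mul_le_mul_right hkey (by positivity)

theorem shiftD_le_of_sq_mul_le {a s v t : ℝ} (ha : 0 ≤ a) (hs : 0 ≤ s)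
    (h : (2 ^ γ₁⁻¹) ^ 2 * (a + s) ≤ v) (hv : ρ' v = ρ' a + t) : shiftD ρ' a s ≤ t / 3 := by
  have hgrow : 4 * ρ' (a + s) ≤ ρ' a + t :=
    hv ▸ (H.four_mul_deriv_le (by positivity)).trans
      (H.deriv_monotoneOn (by simp; positivity) ((by positivity : (0:ℝ) ≤ _).trans h) h)
  have hba : ρ' a ≤ ρ' (a + s) := H.deriv_monotoneOn ha (by simp; positivity) (by linarith)
  linarith [shiftD_le H.deriv_zero.ge H.deriv_monotoneOn ha hs]

theorem shiftD_le_of_add_le_two_mul {a s v t : ℝ} (ha : 0 < a) (hs : 0 ≤ s) (h : a + s ≤ 2 * v)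
    (hv : ρ' v = ρ' a + t) : shiftD ρ' a s ≤ 2 ^ γ₂ * (ρ' a + t) * (s / a) := by
  have hv₀ : 0 ≤ v := by linarith
  have hgrow : ρ' (a + s) ≤ 2 ^ γ₂ * (ρ' a + t) :=
    hv ▸ (H.deriv_monotoneOn (by simp; positivity) (by simp; positivity) h).trans
      (H.deriv_two_mul_le hv₀)
  exact (shiftD_le_mul_div H.deriv_zero.ge H.deriv_monotoneOn ha hs).trans
    (mul_le_mul_of_nonneg_right hgrow (by positivity))

/-- If `a` is small compared with `v`, then `ρ'(a + s) ≤ ρ'(v)/4`, which forces `ρ'(a) ≤ t/3`;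
otherwise the factor `s / (a + s) ≤ s / a` is small. -/
theorem shiftD_mul_shiftD_derivInv_le {a t : ℝ} (ha : 0 ≤ a) (ht : 0 ≤ t) :
    shiftD ρ' a ((4 * (2 ^ γ₁⁻¹) ^ 2 * 2 ^ γ₂)⁻¹ * shiftD (derivInv ρ') (ρ' a) t) ≤ t / 2 := by
  rcases ht.eq_or_lt with rfl | ht
  · simp [shiftD]
  obtain ⟨v, hv₀, hav, hv, hr⟩ := H.exists_shiftD_derivInv_eq ha ht
  set C : ℝ := 2 ^ γ₁⁻¹
  set D : ℝ := 2 ^ γ₂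
  have hC : 1 ≤ C ^ 2 := one_le_pow₀ (one_le_rpow one_le_two (inv_nonneg.2 H.gamma_pos.le))
  have hD : 1 ≤ D := one_le_rpow one_le_two (H.gamma_pos.le.trans H.gamma_le)
  set ε := (4 * C ^ 2 * D)⁻¹
  have hε : ε * (4 * C ^ 2 * D) = 1 := inv_mul_cancel₀ (by positivity)
  set b := ρ' a
  set r := shiftD (derivInv ρ') b t
  have hb : 0 ≤ b := H.deriv_nonneg ha
  have hr₀ : 0 ≤ r := shiftD_nonneg H.derivInv_zero.ge H.derivInv_monotoneOn hb ht.le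
  have hrv : r ≤ v :=
    le_of_mul_le_mul_right (by rw [hr]; nlinarith) (by positivity : 0 < b + t)
  have hεr : 4 * C ^ 2 * (ε * r) ≤ v :=
    calc 4 * C ^ 2 * (ε * r) ≤ 4 * C ^ 2 * (ε * r) * D := le_mul_of_one_le_right (by positivity) hD
      _ = r := by linear_combination r * hε
      _ ≤ v := hrv
  rcases le_total (2 * C ^ 2 * a) v with hsmall | hlarge
  · have hCv : C ^ 2 * (a + ε * r) ≤ v := by linarith
    linarith [H.shiftD_le_of_sq_mul_le ha (by positivity) hCv hv]
  · have ha₀ : 0 < a := by nlinarith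
    calc shiftD ρ' a (ε * r) ≤ D * (b + t) * (ε * r / a) :=
          H.shiftD_le_of_add_le_two_mul ha₀ (by positivity) (by nlinarith) hv
      _ = D * ε * t * v / a := by rw [← mul_div_assoc, mul_mul_mul_comm, mul_comm (b + t), hr]; ring
      _ ≤ D * ε * t * (2 * C ^ 2 * a) / a := by gcongr
      _ = t / 2 * (ε * (4 * C ^ 2 * D)) * (a / a) := by ring
      _ = t / 2 := by rw [hε, div_self ha₀.ne']; ring

theorem conj_shift_le_mul_shiftD_derivInv {a t : ℝ} (ha : 0 ≤ a) (ht : 0 ≤ t) :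
    conj (shift ρ' a) t ≤ 3 * 2 ^ γ₁⁻¹ * (t * shiftD (derivInv ρ') (ρ' a) t) := by
  have hr := shiftD_nonneg H.derivInv_zero.ge H.derivInv_monotoneOn (H.deriv_nonneg ha) ht
  have := conj_shift_le_of_le_shiftD H.deriv_zero.ge H.deriv_monotoneOn ha ht (by positivity)
    (H.le_shiftD_mul_shiftD_derivInv ha ht)
  linarith

theorem mul_shiftD_derivInv_le_conj_shift {a t : ℝ} (ha : 0 ≤ a) (ht : 0 ≤ t) :
    t * shiftD (derivInv ρ') (ρ' a) t ≤ 8 * (2 ^ γ₁⁻¹) ^ 2 * 2 ^ γ₂ * conj (shift ρ' a) t := by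
  set K : ℝ := 4 * (2 ^ γ₁⁻¹) ^ 2 * 2 ^ γ₂
  set r := shiftD (derivInv ρ') (ρ' a) t
  have hr : 0 ≤ r := shiftD_nonneg H.derivInv_zero.ge H.derivInv_monotoneOn (H.deriv_nonneg ha) ht
  have hK : 0 < K := by positivity
  have hs₁ : 0 ≤ K⁻¹ * r := by positivity
  have hconj := mul_sub_shift_le_conj_shift H.deriv_zero.ge H.deriv_monotoneOn ha ht
    (by positivity) (H.le_shiftD_mul_shiftD_derivInv ha ht) hs₁
  have hshift : shift ρ' a (K⁻¹ * r) ≤ K⁻¹ * r * (t / 2) :=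
    (shift_le_mul_shiftD H.deriv_zero.ge H.deriv_monotoneOn ha hs₁).trans
      (mul_le_mul_of_nonneg_left (H.shiftD_mul_shiftD_derivInv_le ha ht) hs₁)
  calc t * r = 2 * K * (K⁻¹ * r * t - K⁻¹ * r * (t / 2)) := by field_simp; ring
    _ ≤ 2 * K * conj (shift ρ' a) t := mul_le_mul_of_nonneg_left (by linarith) (by positivity)
    _ = 8 * (2 ^ γ₁⁻¹) ^ 2 * 2 ^ γ₂ * conj (shift ρ' a) t := by ring

theorem conj_shift_le_shift_derivInv {a t : ℝ} (ha : 0 ≤ a) (ht : 0 ≤ t) :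
    conj (shift ρ' a) t ≤ 12 * (2 ^ γ₁⁻¹) ^ 2 * shift (derivInv ρ') (ρ' a) t :=
  calc conj (shift ρ' a) t ≤ 3 * 2 ^ γ₁⁻¹ * (t * shiftD (derivInv ρ') (ρ' a) t) :=
        H.conj_shift_le_mul_shiftD_derivInv ha ht
    _ ≤ 3 * 2 ^ γ₁⁻¹ * (4 * 2 ^ γ₁⁻¹ * shift (derivInv ρ') (ρ' a) t) :=
        mul_le_mul_of_nonneg_left (mul_shiftD_le_shift H.derivInv_zero.ge H.derivInv_monotoneOn
          (by positivity) (fun _ hy => H.derivInv_two_mul_le hy) (H.deriv_nonneg ha) ht)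
          (by positivity)
    _ = 12 * (2 ^ γ₁⁻¹) ^ 2 * shift (derivInv ρ') (ρ' a) t := by ring

theorem shift_derivInv_le_conj_shift {a t : ℝ} (ha : 0 ≤ a) (ht : 0 ≤ t) :
    shift (derivInv ρ') (ρ' a) t ≤ 8 * (2 ^ γ₁⁻¹) ^ 2 * 2 ^ γ₂ * conj (shift ρ' a) t :=
  (shift_le_mul_shiftD H.derivInv_zero.ge H.derivInv_monotoneOn (H.deriv_nonneg ha) ht).trans
    (H.mul_shiftD_derivInv_le_conj_shift ha ht)

theorem shift_mul_self_le {a lam : ℝ} (ha : 0 ≤ a) (hlam : lam ∈ Icc (0:ℝ) 1) :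
    shift ρ' a (lam * a) ≤ 2 ^ γ₂ * (1 + γ₂) * (lam ^ 2 * ρ a) := by
  have hl := hlam.1
  calc shift ρ' a (lam * a) ≤ lam * a * shiftD ρ' a (lam * a) :=
        shift_le_mul_shiftD H.deriv_zero.ge H.deriv_monotoneOn ha (by positivity)
    _ ≤ lam * a * (2 ^ γ₂ * ρ' a * lam) :=
        mul_le_mul_of_nonneg_left (shiftD_mul_self_le H.deriv_zero.ge H.deriv_monotoneOn
          (fun _ hx => H.deriv_two_mul_le hx) ha hlam) (by positivity)
    _ = 2 ^ γ₂ * lam ^ 2 * (a * ρ' a) := by ring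
    _ ≤ 2 ^ γ₂ * lam ^ 2 * ((1 + γ₂) * ρ a) :=
        mul_le_mul_of_nonneg_left (H.mul_deriv_le ha) (by positivity)
    _ = 2 ^ γ₂ * (1 + γ₂) * (lam ^ 2 * ρ a) := by ring

theorem sq_mul_le_shift_mul_self {a lam : ℝ} (ha : 0 ≤ a) (hlam : lam ∈ Icc (0:ℝ) 1) :
    lam ^ 2 * ρ a ≤ 8 * 2 ^ γ₂ * shift ρ' a (lam * a) := by
  have hl := hlam.1
  calc lam ^ 2 * ρ a ≤ lam ^ 2 * (a * ρ' a) :=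
        mul_le_mul_of_nonneg_left (H.le_mul_deriv ha) (by positivity)
    _ = 2 * (lam * a * (ρ' a * lam / 2)) := by ring
    _ ≤ 2 * (lam * a * shiftD ρ' a (lam * a)) :=
        mul_le_mul_of_nonneg_left (mul_le_mul_of_nonneg_left
          (le_shiftD_mul_self H.deriv_monotoneOn H.deriv_zero ha hlam) (by positivity)) two_pos.le
    _ ≤ 2 * (4 * 2 ^ γ₂ * shift ρ' a (lam * a)) :=
        mul_le_mul_of_nonneg_left (mul_shiftD_le_shift H.deriv_zero.ge H.deriv_monotoneOn
          (by positivity) (fun _ hx => H.deriv_two_mul_le hx) ha (by positivity)) two_pos.le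
    _ = 8 * 2 ^ γ₂ * shift ρ' a (lam * a) := by ring

theorem conj_shift_mul_deriv_le {a lam : ℝ} (ha : 0 ≤ a) (hlam : lam ∈ Icc (0:ℝ) 1) :
    conj (shift ρ' a) (lam * ρ' a) ≤ 3 * (2 ^ γ₁⁻¹) ^ 2 * (1 + γ₂) * (lam ^ 2 * ρ a) := by
  have hl := hlam.1
  have hb := H.deriv_nonneg ha
  calc conj (shift ρ' a) (lam * ρ' a)
      ≤ 3 * 2 ^ γ₁⁻¹ * (lam * ρ' a * shiftD (derivInv ρ') (ρ' a) (lam * ρ' a)) :=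
        H.conj_shift_le_mul_shiftD_derivInv ha (by positivity)
    _ ≤ 3 * 2 ^ γ₁⁻¹ * (lam * ρ' a * (2 ^ γ₁⁻¹ * derivInv ρ' (ρ' a) * lam)) := by
        gcongr
        exact shiftD_mul_self_le H.derivInv_zero.ge H.derivInv_monotoneOn
          (fun _ hy => H.derivInv_two_mul_le hy) hb hlam
    _ = 3 * (2 ^ γ₁⁻¹) ^ 2 * lam ^ 2 * (a * ρ' a) := by rw [H.derivInv_deriv ha]; ring
    _ ≤ 3 * (2 ^ γ₁⁻¹) ^ 2 * lam ^ 2 * ((1 + γ₂) * ρ a) :=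
        mul_le_mul_of_nonneg_left (H.mul_deriv_le ha) (by positivity)
    _ = 3 * (2 ^ γ₁⁻¹) ^ 2 * (1 + γ₂) * (lam ^ 2 * ρ a) := by ring

theorem sq_mul_le_conj_shift_mul_deriv {a lam : ℝ} (ha : 0 ≤ a) (hlam : lam ∈ Icc (0:ℝ) 1) :
    lam ^ 2 * ρ a ≤ 16 * (2 ^ γ₁⁻¹) ^ 2 * 2 ^ γ₂ * conj (shift ρ' a) (lam * ρ' a) := by
  have hl := hlam.1
  have hb := H.deriv_nonneg ha
  calc lam ^ 2 * ρ a ≤ lam ^ 2 * (a * ρ' a) :=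
        mul_le_mul_of_nonneg_left (H.le_mul_deriv ha) (by positivity)
    _ = 2 * (lam * ρ' a * (derivInv ρ' (ρ' a) * lam / 2)) := by rw [H.derivInv_deriv ha]; ring
    _ ≤ 2 * (lam * ρ' a * shiftD (derivInv ρ') (ρ' a) (lam * ρ' a)) := by
        gcongr
        exact le_shiftD_mul_self H.derivInv_monotoneOn H.derivInv_zero hb hlam
    _ ≤ 2 * (8 * (2 ^ γ₁⁻¹) ^ 2 * 2 ^ γ₂ * conj (shift ρ' a) (lam * ρ' a)) :=
        mul_le_mul_of_nonneg_left (H.mul_shiftD_derivInv_le_conj_shift ha (by positivity))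
          two_pos.le
    _ = 16 * (2 ^ γ₁⁻¹) ^ 2 * 2 ^ γ₂ * conj (shift ρ' a) (lam * ρ' a) := by ring

end IsEllipticNFun

theorem inv_mul_le_and_le_mul_of_le_mul {x y K₁ K₂ c : ℝ} (hx : 0 ≤ x) (hK₁ : 0 < K₁)
    (hK₁c : K₁ ≤ c) (hK₂c : K₂ ≤ c) (hxy : x ≤ K₁ * y) (hyx : y ≤ K₂ * x) :
    c⁻¹ * x ≤ y ∧ y ≤ c * x := by
  have hy : 0 ≤ y := nonneg_of_mul_nonneg_right (hx.trans hxy) hK₁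
  exact ⟨(inv_mul_le_iff₀ (hK₁.trans_le hK₁c)).2 (hxy.trans (mul_le_mul_of_nonneg_right hK₁c hy)),
    hyx.trans (mul_le_mul_of_nonneg_right hK₂c hx)⟩

/-- For an elliptic N-function `ρ` there is `c ≥ 1`, depending only on the characteristics,
such that `(ρ_a)*(t) ∼ (ρ*)_{ρ'(a)}(t)` for all `a, t ≥ 0`, and
`ρ_a(λ a) ∼ λ² ρ(a) ∼ (ρ_a)*(λ ρ'(a))` for all `a ≥ 0` and `λ ∈ [0,1]`.
Here `(ρ*)_{ρ'(a)}` is the shift by `ρ'(a)` of the conjugate `ρ*`, formed with the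
derivative of `ρ*`. -/
theorem conj_shift_equiv (γ₁ γ₂ : ℝ) (hγ₁ : 0 < γ₁) (hγ : γ₁ ≤ γ₂) :
    ∃ c : ℝ, 1 ≤ c ∧
      ∀ ρ ρ' ρ'' : ℝ → ℝ, IsEllipticNFun ρ ρ' ρ'' γ₁ γ₂ →
        (∀ a t : ℝ, 0 ≤ a → 0 ≤ t →
          c⁻¹ * shift (deriv (conj ρ)) (ρ' a) t ≤ conj (shift ρ' a) t ∧
            conj (shift ρ' a) t ≤ c * shift (deriv (conj ρ)) (ρ' a) t) ∧
        (∀ a : ℝ, 0 ≤ a → ∀ lam ∈ Set.Icc (0:ℝ) 1,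
          (c⁻¹ * (lam ^ 2 * ρ a) ≤ shift ρ' a (lam * a) ∧
            shift ρ' a (lam * a) ≤ c * (lam ^ 2 * ρ a)) ∧
          (c⁻¹ * (lam ^ 2 * ρ a) ≤ conj (shift ρ' a) (lam * ρ' a) ∧
            conj (shift ρ' a) (lam * ρ' a) ≤ c * (lam ^ 2 * ρ a))) := by
  set C : ℝ := 2 ^ γ₁⁻¹
  set D : ℝ := 2 ^ γ₂
  have hγ₂ : 0 ≤ γ₂ := hγ₁.le.trans hγ
  have hC : 1 ≤ C ^ 2 := one_le_pow₀ (one_le_rpow one_le_two (inv_nonneg.2 hγ₁.le))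
  have hD : 1 ≤ D := one_le_rpow one_le_two hγ₂
  have hCD : C ^ 2 ≤ C ^ 2 * D := le_mul_of_one_le_right (by positivity) hD
  have hDC : D ≤ C ^ 2 * D := le_mul_of_one_le_left (by positivity) hC
  refine ⟨16 * C ^ 2 * D * (1 + γ₂), by nlinarith, fun ρ ρ' ρ'' H => ⟨fun a t ha ht => ?_,
    fun a ha lam hlam => ⟨?_, ?_⟩⟩⟩
  · rw [H.shift_deriv_conj (H.deriv_nonneg ha) ht]
    exact inv_mul_le_and_le_mul_of_le_mul
      (shift_nonneg H.derivInv_zero.ge H.derivInv_monotoneOn (H.deriv_nonneg ha) ht)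
      (by positivity) (by nlinarith) (by nlinarith)
      (H.shift_derivInv_le_conj_shift ha ht) (H.conj_shift_le_shift_derivInv ha ht)
  · exact inv_mul_le_and_le_mul_of_le_mul (mul_nonneg (sq_nonneg lam) (H.nonneg ha))
      (by positivity) (by nlinarith) (by nlinarith)
      (H.sq_mul_le_shift_mul_self ha hlam) (H.shift_mul_self_le ha hlam)
  · exact inv_mul_le_and_le_mul_of_le_mul (mul_nonneg (sq_nonneg lam) (H.nonneg ha))
      (by positivity) (by nlinarith) (by nlinarith)
      (H.sq_mul_le_conj_shift_mul_deriv ha hlam) (H.conj_shift_mul_deriv_le ha hlam)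
end
end

section
/- Let q ∈ (1,∞), κ ∈ [0,1], and define ρ(t) := ∫₀ᵗ (κ + s)^{q−2} s ds for t ≥ 0. Then there exists c > 0, depending only on q, such that for all a ≥ 0, all λ ≥ 0 and all t ≥ 0 one has ρ_a(λ t) ≤ c max{λ^q, λ²} ρ_a(t) and (ρ_a)*(λ t) ≤ c max{λ^{q'}, λ²} (ρ_a)*(t), where q' := q/(q−1). -/
open Set

noncomputable section

/-!
Shifting by `a` only replaces `κ` by `κ + a`, so it suffices to treat
`ρ_b(t) = ∫₀ᵗ (b + τ)^(q-2) τ dτ` for every `b ≥ 0`, and `c = 1` works.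
Substituting `τ = λσ` reduces the first inequality to the pointwise bound
`(b + λσ)^(q-2) ≤ max(λ^(q-2), 1) (b + σ)^(q-2)`. Applied with the factor `1/μ`, it gives
`λ μ ρ_b(u) ≤ ρ_b(μ u)` whenever `λ ≤ min(μ, μ^(q-1))`; substituting `s = μ u` in the supremum
defining the conjugate then yields `ρ_b*(λ t) ≤ λ μ ρ_b*(t)`, and the choice
`μ = max(λ^(1/(q-1)), λ)` makes `λ μ = max(λ^q', λ²)`.
-/

open MeasureTheory intervalIntegral

namespace ShiftedIndex

section Conjugate

variable {f g : ℝ → ℝ} {t : ℝ}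

lemma conj_congr (h : EqOn f g (Ici 0)) : conj f = conj g :=
  funext fun _ => congrArg sSup (image_congr fun s hs => by rw [h hs])

lemma conj_nonneg (hf0 : f 0 = 0) (hbdd : BddAbove ((fun s => s * t - f s) '' Ici 0)) :
    0 ≤ conj f t :=
  le_csSup hbdd ⟨0, self_mem_Ici, by simp [hf0]⟩

lemma conj_mul_le {lam μ : ℝ} (hlam : 0 ≤ lam) (hμ : 0 < μ)
    (hbdd : BddAbove ((fun s => s * t - f s) '' Ici 0))
    (hf : ∀ u, 0 ≤ u → lam * μ * f u ≤ f (μ * u)) :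
    conj f (lam * t) ≤ lam * μ * conj f t := by
  refine csSup_le (nonempty_Ici.image _) ?_
  rintro _ ⟨s, hs, rfl⟩
  have hu : 0 ≤ s / μ := div_nonneg hs hμ.le
  have hfs : lam * μ * f (s / μ) ≤ f s := by
    simpa only [mul_div_cancel₀ s hμ.ne'] using hf (s / μ) hu
  have hsup : s / μ * t - f (s / μ) ≤ conj f t := le_csSup hbdd ⟨s / μ, hu, rfl⟩
  calc s * (lam * t) - f s ≤ lam * μ * (s / μ * t - f (s / μ)) := by
        have : s * (lam * t) = lam * μ * (s / μ * t) := by field_simp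
        linarith
    _ ≤ lam * μ * conj f t := by gcongr

end Conjugate

lemma rpow_add_mul_le {b σ μ : ℝ} (hb : 0 ≤ b) (hσ : 0 < σ) (hμ : 0 < μ) (p : ℝ) :
    (b + μ * σ) ^ p ≤ max (μ ^ p) 1 * (b + σ) ^ p := by
  have hpow : ∀ m, m = μ ∨ m = 1 → m ^ p ≤ max (μ ^ p) 1 := by
    rintro m (rfl | rfl) <;> simp
  rcases le_total 0 p with hp | hp
  · have hle : b + μ * σ ≤ max μ 1 * (b + σ) := by
      nlinarith [le_max_left μ 1, le_max_right μ 1]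
    calc (b + μ * σ) ^ p ≤ (max μ 1 * (b + σ)) ^ p := by gcongr
      _ = max μ 1 ^ p * (b + σ) ^ p := Real.mul_rpow (by positivity) (by positivity)
      _ ≤ max (μ ^ p) 1 * (b + σ) ^ p := by gcongr; exact hpow _ (max_choice μ 1)
  · have hle : min μ 1 * (b + σ) ≤ b + μ * σ := by
      nlinarith [min_le_left μ 1, min_le_right μ 1]
    calc (b + μ * σ) ^ p ≤ (min μ 1 * (b + σ)) ^ p :=
          Real.rpow_le_rpow_of_nonpos (by positivity) hle hp
      _ = min μ 1 ^ p * (b + σ) ^ p := Real.mul_rpow (by positivity) (by positivity)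
      _ ≤ max (μ ^ p) 1 * (b + σ) ^ p := by gcongr; exact hpow _ (min_choice μ 1)

lemma integral_zero_mul_le {φ : ℝ → ℝ} (hφ : ContinuousOn φ (Ici 0)) {lam M t : ℝ}
    (hlam : 0 ≤ lam) (ht : 0 ≤ t) (h : ∀ σ, 0 ≤ σ → lam * φ (lam * σ) ≤ M * φ σ) :
    ∫ τ in (0:ℝ)..lam * t, φ τ ≤ M * ∫ τ in (0:ℝ)..t, φ τ := by
  have hint : ∀ c, 0 ≤ c → IntervalIntegrable (fun σ => φ (c * σ)) volume 0 t := fun c hc =>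
    (hφ.comp (continuousOn_const.mul continuousOn_id) fun σ hσ =>
      mul_nonneg hc hσ.1).intervalIntegrable_of_Icc ht
  calc ∫ τ in (0:ℝ)..lam * t, φ τ = ∫ σ in (0:ℝ)..t, lam * φ (lam * σ) := by
        symm
        rw [intervalIntegral.integral_const_mul, ← smul_eq_mul, smul_integral_comp_mul_left,
          mul_zero]
    _ ≤ ∫ σ in (0:ℝ)..t, M * φ σ :=
        integral_mono_on ht ((hint lam hlam).const_mul lam)
          (((hφ.mono Icc_subset_Ici_self).intervalIntegrable_of_Icc ht).const_mul M)
          fun σ hσ => h σ hσ.1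
    _ = M * ∫ τ in (0:ℝ)..t, φ τ := intervalIntegral.integral_const_mul M _

def rho (q κ t : ℝ) : ℝ :=
  ∫ τ in (0:ℝ)..t, (κ + τ) ^ (q - 2) * τ

section Rho

variable {q b : ℝ}

lemma eqOn_shift_rho {κ a : ℝ} (ha : 0 ≤ a) :
    EqOn (shift (fun s => (κ + s) ^ (q - 2) * s) a) (rho q (κ + a)) (Ici 0) := by
  intro t ht
  refine integral_congr fun τ hτ => ?_
  rw [uIcc_of_le ht] at hτ
  rcases eq_or_ne (a + τ) 0 with h | h
  · obtain rfl : τ = 0 := by linarith [hτ.1]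
    simp
  · simp only [mul_div_cancel_right₀ _ h, add_assoc]

lemma continuousOn_rho_integrand (hq : 1 < q) (hb : 0 ≤ b) :
    ContinuousOn (fun τ : ℝ => (b + τ) ^ (q - 2) * τ) (Ici 0) := by
  rcases hb.eq_or_lt with rfl | hb
  · have hcont : ContinuousOn (fun τ : ℝ => τ ^ (q - 1)) (Ici 0) :=
      continuousOn_id.rpow_const fun _ _ => Or.inr (by linarith)
    refine hcont.congr fun τ (hτ : 0 ≤ τ) => ?_
    rw [zero_add, ← Real.rpow_add_one' hτ (by linarith)]
    ring_nf
  · refine ContinuousOn.mul ?_ continuousOn_id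
    exact (by fun_prop : ContinuousOn (fun τ : ℝ => b + τ) (Ici 0)).rpow_const
      fun τ (hτ : 0 ≤ τ) => Or.inl (by linarith)

lemma rho_zero : rho q b 0 = 0 :=
  integral_same

lemma rho_nonneg (hb : 0 ≤ b) {t : ℝ} (ht : 0 ≤ t) : 0 ≤ rho q b t :=
  integral_nonneg ht fun τ hτ => mul_nonneg (Real.rpow_nonneg (by linarith [hτ.1]) _) hτ.1

lemma rho_one_pos (hq : 1 < q) (hb : 0 ≤ b) : 0 < rho q b 1 :=
  intervalIntegral_pos_of_pos_on
    ((continuousOn_rho_integrand hq hb).mono Icc_subset_Ici_self |>.intervalIntegrable_of_Icc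
      zero_le_one)
    (fun τ hτ => mul_pos (Real.rpow_pos_of_pos (by linarith [hτ.1]) _) hτ.1) one_pos

lemma rho_mul_le (hq : 1 < q) (hb : 0 ≤ b) {lam t : ℝ} (hlam : 0 ≤ lam) (ht : 0 ≤ t) :
    rho q b (lam * t) ≤ max (lam ^ q) (lam ^ (2:ℝ)) * rho q b t := by
  refine integral_zero_mul_le (continuousOn_rho_integrand hq hb) hlam ht fun σ hσ => ?_
  obtain rfl | hl := hlam.eq_or_lt
  · simp only [zero_mul]
    exact mul_nonneg (by positivity) (mul_nonneg (Real.rpow_nonneg (by linarith) _) hσ)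
  obtain rfl | hσ := hσ.eq_or_lt
  · simp
  have hmax : lam ^ (2:ℝ) * max (lam ^ (q - 2)) 1 = max (lam ^ q) (lam ^ (2:ℝ)) := by
    rw [mul_max_of_nonneg _ _ (by positivity), ← Real.rpow_add hl, mul_one, add_sub_cancel]
  calc lam * ((b + lam * σ) ^ (q - 2) * (lam * σ))
      = lam ^ (2:ℝ) * (b + lam * σ) ^ (q - 2) * σ := by rw [Real.rpow_two]; ring
    _ ≤ lam ^ (2:ℝ) * (max (lam ^ (q - 2)) 1 * (b + σ) ^ (q - 2)) * σ := by
        gcongr; exact rpow_add_mul_le hb hσ hl _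
    _ = max (lam ^ q) (lam ^ (2:ℝ)) * ((b + σ) ^ (q - 2) * σ) := by rw [← hmax]; ring

lemma mul_rho_le_rho_mul (hq : 1 < q) (hb : 0 ≤ b) {lam μ u : ℝ} (hlam : 0 ≤ lam) (hμ : 0 < μ)
    (hμq : lam ≤ μ ^ (q - 1)) (hμ2 : lam ≤ μ) (hu : 0 ≤ u) :
    lam * μ * rho q b u ≤ rho q b (μ * u) := by
  have hscale := rho_mul_le hq hb (inv_nonneg.2 hμ.le) (mul_nonneg hμ.le hu)
  rw [inv_mul_cancel_left₀ hμ.ne', Real.inv_rpow hμ.le, Real.inv_rpow hμ.le] at hscale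
  have hcoef : lam * μ * max (μ ^ q)⁻¹ (μ ^ (2:ℝ))⁻¹ ≤ 1 := by
    rw [mul_max_of_nonneg _ _ (by positivity), max_le_iff, ← div_eq_mul_inv, ← div_eq_mul_inv,
      div_le_one (by positivity), div_le_one (by positivity), Real.rpow_two]
    refine ⟨?_, by nlinarith⟩
    calc lam * μ ≤ μ ^ (q - 1) * μ := by gcongr
      _ = μ ^ q := by rw [← Real.rpow_add_one hμ.ne', sub_add_cancel]
  calc lam * μ * rho q b u ≤ lam * μ * (max (μ ^ q)⁻¹ (μ ^ (2:ℝ))⁻¹ * rho q b (μ * u)) := by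
        gcongr
    _ = lam * μ * max (μ ^ q)⁻¹ (μ ^ (2:ℝ))⁻¹ * rho q b (μ * u) := by ring
    _ ≤ rho q b (μ * u) := mul_le_of_le_one_left (rho_nonneg hb (by positivity)) hcoef

/-- `rho` grows like `s ^ min q 2`, so `s t - rho s` is eventually negative. -/
lemma bddAbove_rho (hq : 1 < q) (hb : 0 ≤ b) {t : ℝ} (ht : 0 ≤ t) :
    BddAbove ((fun s => s * t - rho q b s) '' Ici 0) := by
  set c := rho q b 1
  have hc : 0 < c := rho_one_pos hq hb
  set S := max (t / c) ((t / c) ^ (q - 1)⁻¹)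
  have hS : 0 ≤ S := le_max_of_le_left (by positivity)
  refine ⟨S * t, ?_⟩
  rintro _ ⟨s, hs, rfl⟩
  have hρ := rho_nonneg (q := q) hb hs
  rcases le_or_gt s S with hsS | hSs
  · nlinarith [mul_le_mul_of_nonneg_right hsS ht]
  have hts : t / c < s := (le_max_left _ _).trans_lt hSs
  have htsq : t / c < s ^ (q - 1) :=
    (Real.rpow_inv_lt_iff_of_pos (by positivity) hs (by linarith)).1
      ((le_max_right _ _).trans_lt hSs)
  have hlow := mul_rho_le_rho_mul hq hb (by positivity) (hS.trans_lt hSs) htsq.le hts.le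
    zero_le_one
  rw [mul_one] at hlow
  have hst : s * t = t / c * s * c := by field_simp
  nlinarith [mul_nonneg hS ht]

lemma exists_conj_scale (hq : 1 < q) {lam : ℝ} (hlam : 0 ≤ lam) :
    ∃ μ, 0 < μ ∧ lam ≤ μ ^ (q - 1) ∧ lam ≤ μ ∧
      lam * μ ≤ max (lam ^ (q / (q - 1))) (lam ^ (2:ℝ)) := by
  obtain rfl | hl := hlam.eq_or_lt
  · exact ⟨1, one_pos, by simp, zero_le_one, by rw [zero_mul]; positivity⟩
  have hq1 : q - 1 ≠ 0 := by linarith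
  refine ⟨max (lam ^ (q - 1)⁻¹) lam, lt_max_of_lt_right hl, ?_, le_max_right _ _, le_of_eq ?_⟩
  · calc lam = (lam ^ (q - 1)⁻¹) ^ (q - 1) := (Real.rpow_inv_rpow hl.le hq1).symm
      _ ≤ max (lam ^ (q - 1)⁻¹) lam ^ (q - 1) :=
          Real.rpow_le_rpow (by positivity) (le_max_left _ _) (by linarith)
  · rw [mul_max_of_nonneg _ _ hl.le, show q / (q - 1) = 1 + (q - 1)⁻¹ by field_simp; ring,
      Real.rpow_add hl, Real.rpow_one, Real.rpow_two, sq]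

lemma conj_rho_mul_le (hq : 1 < q) (hb : 0 ≤ b) {lam t : ℝ} (hlam : 0 ≤ lam) (ht : 0 ≤ t) :
    conj (rho q b) (lam * t) ≤ max (lam ^ (q / (q - 1))) (lam ^ (2:ℝ)) * conj (rho q b) t := by
  obtain ⟨μ, hμ, hμq, hμ2, hlamμ⟩ := exists_conj_scale hq hlam
  have hbdd := bddAbove_rho hq hb ht
  calc conj (rho q b) (lam * t) ≤ lam * μ * conj (rho q b) t :=
        conj_mul_le hlam hμ hbdd fun u hu => mul_rho_le_rho_mul hq hb hlam hμ hμq hμ2 hu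
    _ ≤ _ := mul_le_mul_of_nonneg_right hlamμ (conj_nonneg rho_zero hbdd)

end Rho

end ShiftedIndex

open ShiftedIndex

/-- For `ρ(t) = ∫₀ᵗ (κ+s)^(q-2) s ds` with `q ∈ (1,∞)`, `κ ∈ [0,1]`, there is `c > 0`
depending only on `q` with `ρ_a(λ t) ≤ c max{λ^q, λ²} ρ_a(t)` and
`(ρ_a)*(λ t) ≤ c max{λ^{q'}, λ²} (ρ_a)*(t)` uniformly in `a, λ ≥ 0`, where
`ρ' s = (κ+s)^(q-2) s` and `q' = q/(q-1)`. -/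
theorem shifted_index (q : ℝ) (hq : 1 < q) :
    ∃ c : ℝ, 0 < c ∧
      ∀ κ ∈ Icc (0:ℝ) 1, ∀ a : ℝ, 0 ≤ a → ∀ lam : ℝ, 0 ≤ lam → ∀ t : ℝ, 0 ≤ t →
        shift (fun s => (κ + s) ^ (q - 2) * s) a (lam * t) ≤
          c * max (lam ^ q) (lam ^ (2:ℝ)) *
            shift (fun s => (κ + s) ^ (q - 2) * s) a t ∧
        conj (shift (fun s => (κ + s) ^ (q - 2) * s) a) (lam * t) ≤
          c * max (lam ^ (q / (q - 1))) (lam ^ (2:ℝ)) *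
            conj (shift (fun s => (κ + s) ^ (q - 2) * s) a) t := by
  refine ⟨1, one_pos, fun κ hκ a ha lam hlam t ht => ?_⟩
  have hb : 0 ≤ κ + a := add_nonneg hκ.1 ha
  have hshift := eqOn_shift_rho (q := q) (κ := κ) ha
  rw [conj_congr hshift, hshift (mul_nonneg hlam ht), hshift ht, one_mul, one_mul]
  exact ⟨rho_mul_le hq hb hlam ht, conj_rho_mul_le hq hb hlam ht⟩
end
end
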